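/- arXiv:2601.22682 — 3 statements merged into one kernel-verified Lean document; each statement's English description precedes it below -/
import Mathlib

section
/- Let G : ℝ^{d_x} × ℝ^{d_y} → ℝ be L₂-smooth with L₂ > 0, and let γ ∈ (0, 1/(2L₂)). Then the Moreau envelope V_γ is differentiable on ℝ^{d_x} × ℝ^{d_y}, and its gradient is given by ∇V_γ(x,y) = ( ∇_x G(x, θ*_γ(x,y)), (y − θ*_γ(x,y))/γ ), where θ*_γ(x,y) is the unique minimizer of θ ↦ G(x,θ) + ‖θ − y‖²/(2γ). -/
open scoped RealInnerProductSpace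

noncomputable section

/-- `Euc d` is the Euclidean space `ℝ^d`. -/
abbrev Euc (d : ℕ) : Type := EuclideanSpace ℝ (Fin d)

/-- Gradient of `h` with respect to the first block of variables. -/
noncomputable def gradx {dx dy : ℕ} (h : Euc dx → Euc dy → ℝ) (x : Euc dx) (y : Euc dy) :
    Euc dx :=
  gradient (fun x' => h x' y) x

/-- Gradient of `h` with respect to the second block of variables. -/
noncomputable def grady {dx dy : ℕ} (h : Euc dx → Euc dy → ℝ) (x : Euc dx) (y : Euc dy) :
    Euc dy :=
  gradient (fun y' => h x y') y

/-- The ℓ²-norm of a pair of vectors (the norm on the product `ℝ^{d_x} × ℝ^{d_y}`). -/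
noncomputable def pnorm {dx dy : ℕ} (a : Euc dx) (b : Euc dy) : ℝ :=
  Real.sqrt (‖a‖ ^ 2 + ‖b‖ ^ 2)

/-- `h : ℝ^{d_x} × ℝ^{d_y} → ℝ` is `L`-smooth: it is differentiable and its gradient is
`L`-Lipschitz with respect to the ℓ² product norm. -/
def LSmooth {dx dy : ℕ} (L : ℝ) (h : Euc dx → Euc dy → ℝ) : Prop :=
  (∀ y, Differentiable ℝ fun x => h x y) ∧ (∀ x, Differentiable ℝ fun y => h x y) ∧
    ∀ x y x' y',
      pnorm (gradx h x y - gradx h x' y') (grady h x y - grady h x' y') ≤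
        L * pnorm (x - x') (y - y')

/-- The Moreau envelope `V_γ` of `G`. -/
noncomputable def moreau {dx dy : ℕ} (G : Euc dx → Euc dy → ℝ) (γ : ℝ)
    (x : Euc dx) (y : Euc dy) : ℝ :=
  ⨅ θ : Euc dy, (G x θ + ‖θ - y‖ ^ 2 / (2 * γ))

/- ### Auxiliary lemmas -/

lemma aux_hasFDerivAt_innerSL_gradient {d : ℕ} (f : Euc d → ℝ) (x : Euc d)
    (hf : DifferentiableAt ℝ f x) :
    HasFDerivAt f (innerSL ℝ (gradient f x)) x := by
  have h := hf.hasGradientAt.hasFDerivAt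
  exact h.congr_fderiv (by ext v; simp [InnerProductSpace.toDual_apply_apply])

lemma aux_norm_sub_le_of_mem_segment {d : ℕ} {x x' z : Euc d} (hz : z ∈ segment ℝ x x') :
    ‖z - x‖ ≤ ‖x' - x‖ := by
  obtain ⟨a, b, ha, hb, hab, rfl⟩ := hz
  have : a • x + b • x' - x = b • (x' - x) := by
    rw [smul_sub]; rw [show a = 1 - b by linarith]; module
  rw [this, norm_smul]
  simp only [Real.norm_eq_abs, abs_of_nonneg hb]
  nlinarith [norm_nonneg (x' - x)]

/-- Descent-type quadratic bound from a Lipschitz-type gradient estimate. -/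
lemma aux_quad_bound {d : ℕ} (f : Euc d → ℝ) (L : ℝ) (hL0 : 0 ≤ L) (x x' : Euc d)
    (hf : Differentiable ℝ f)
    (hL : ∀ z, ‖gradient f z - gradient f x‖ ≤ L * ‖z - x‖) :
    |f x' - f x - ⟪gradient f x, x' - x⟫| ≤ L * ‖x' - x‖ ^ 2 := by
  set g : Euc d → ℝ := fun z => f z - ⟪gradient f x, z⟫ with hg
  have hder : ∀ z, HasFDerivAt g (innerSL ℝ (gradient f z - gradient f x)) z := by
    intro z
    have h1 := aux_hasFDerivAt_innerSL_gradient f z (hf z)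
    have h2 : HasFDerivAt (fun z => (⟪gradient f x, z⟫ : ℝ)) (innerSL ℝ (gradient f x)) z :=
      (innerSL ℝ (gradient f x)).hasFDerivAt
    have := h1.sub h2
    refine this.congr_fderiv ?_
    ext v; simp [inner_sub_left]
  have hseg : Convex ℝ (segment ℝ x x') := convex_segment x x'
  have key := hseg.norm_image_sub_le_of_norm_hasFDerivWithin_le
    (f := g) (f' := fun z => innerSL ℝ (gradient f z - gradient f x))
    (C := L * ‖x' - x‖)
    (fun z _ => (hder z).hasFDerivWithinAt)
    (fun z hz => by
      rw [innerSL_apply_norm]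
      exact (hL z).trans (by
        have := aux_norm_sub_le_of_mem_segment hz
        nlinarith))
    (left_mem_segment ℝ x x') (right_mem_segment ℝ x x')
  have heq : g x' - g x = f x' - f x - ⟪gradient f x, x' - x⟫ := by
    simp only [hg, inner_sub_right]; ring
  calc |f x' - f x - ⟪gradient f x, x' - x⟫| = ‖g x' - g x‖ := by rw [heq]; rfl
    _ ≤ L * ‖x' - x‖ * ‖x' - x‖ := key
    _ = L * ‖x' - x‖ ^ 2 := by ring

/-- Derivative of the penalized objective. -/
lemma aux_hasFDerivAt_obj {d : ℕ} (g : Euc d → ℝ) (hg : Differentiable ℝ g)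
    (γ : ℝ) (y θ₀ : Euc d) :
    HasFDerivAt (fun θ => g θ + ‖θ - y‖ ^ 2 / (2 * γ))
      (innerSL ℝ (gradient g θ₀ + (γ⁻¹ • (θ₀ - y)))) θ₀ := by
  have h1 := aux_hasFDerivAt_innerSL_gradient g θ₀ (hg θ₀)
  have hsub : HasFDerivAt (fun θ : Euc d => θ - y) (ContinuousLinearMap.id ℝ (Euc d)) θ₀ :=
    (hasFDerivAt_id θ₀).sub_const y
  have h2 : HasFDerivAt (fun θ : Euc d => (⟪θ - y, θ - y⟫ : ℝ))
      ((fderivInnerCLM ℝ (θ₀ - y, θ₀ - y)).comp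
        ((ContinuousLinearMap.id ℝ (Euc d)).prod (ContinuousLinearMap.id ℝ (Euc d)))) θ₀ :=
    hsub.inner ℝ hsub
  have h3 : HasFDerivAt (fun θ : Euc d => ‖θ - y‖ ^ 2 / (2 * γ))
      ((2 * γ)⁻¹ • ((fderivInnerCLM ℝ (θ₀ - y, θ₀ - y)).comp
        ((ContinuousLinearMap.id ℝ (Euc d)).prod (ContinuousLinearMap.id ℝ (Euc d))))) θ₀ := by
    have := h2.const_smul ((2 * γ)⁻¹ : ℝ)
    refine this.congr_of_eventuallyEq (Filter.Eventually.of_forall fun θ => ?_)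
    rw [Pi.smul_apply, real_inner_self_eq_norm_sq]
    simp [div_eq_inv_mul, smul_eq_mul]
  have := h1.add h3
  refine HasFDerivAt.congr_fderiv this ?_
  ext v
  simp only [innerSL_apply_apply, inner_add_left, ContinuousLinearMap.add_apply,
    ContinuousLinearMap.coe_smul', Pi.smul_apply, ContinuousLinearMap.coe_comp',
    Function.comp_apply, ContinuousLinearMap.prod_apply, ContinuousLinearMap.coe_id', id_eq,
    fderivInnerCLM_apply, smul_eq_mul, real_inner_smul_left]
  rw [real_inner_comm v (θ₀ - y)]
  ring

lemma aux_pnorm_le {dx dy : ℕ} (a : Euc dx) (b : Euc dy) : pnorm a b ≤ ‖a‖ + ‖b‖ := by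
  rw [pnorm]
  have h1 : ‖a‖ ^ 2 + ‖b‖ ^ 2 ≤ (‖a‖ + ‖b‖) ^ 2 := by
    nlinarith [norm_nonneg a, norm_nonneg b]
  calc Real.sqrt (‖a‖ ^ 2 + ‖b‖ ^ 2) ≤ Real.sqrt ((‖a‖ + ‖b‖) ^ 2) := Real.sqrt_le_sqrt h1
    _ = ‖a‖ + ‖b‖ := Real.sqrt_sq (by positivity)

lemma aux_le_pnorm_left {dx dy : ℕ} (a : Euc dx) (b : Euc dy) : ‖a‖ ≤ pnorm a b := by
  rw [pnorm]
  exact ((Real.sqrt_sq (norm_nonneg a)).symm.le).trans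
    (Real.sqrt_le_sqrt (by nlinarith [sq_nonneg ‖b‖]))

lemma aux_le_pnorm_right {dx dy : ℕ} (a : Euc dx) (b : Euc dy) : ‖b‖ ≤ pnorm a b := by
  rw [pnorm]
  exact ((Real.sqrt_sq (norm_nonneg b)).symm.le).trans
    (Real.sqrt_le_sqrt (by nlinarith [sq_nonneg ‖a‖]))

lemma aux_sq_expand_sub {d : ℕ} (γ : ℝ) (hγ : γ ≠ 0) (a v : Euc d) :
    ‖a - v‖ ^ 2 / (2 * γ) = ‖a‖ ^ 2 / (2 * γ) - γ⁻¹ * ⟪a, v⟫ + ‖v‖ ^ 2 / (2 * γ) := by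
  rw [norm_sub_sq_real]
  set t := (⟪a, v⟫ : ℝ) with ht
  field_simp

lemma aux_sq_expand_add {d : ℕ} (γ : ℝ) (hγ : γ ≠ 0) (a v : Euc d) :
    ‖a + v‖ ^ 2 / (2 * γ) = ‖a‖ ^ 2 / (2 * γ) + γ⁻¹ * ⟪a, v⟫ + ‖v‖ ^ 2 / (2 * γ) := by
  rw [norm_add_sq_real]
  set t := (⟪a, v⟫ : ℝ) with ht
  field_simp

set_option maxHeartbeats 1000000 in
/-- for `L₂`-smooth `G` and `γ ∈ (0, 1/(2L₂))`, the Moreau envelope `V_γ` is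
differentiable on `ℝ^{d_x} × ℝ^{d_y}` with gradient
`∇V_γ(x,y) = (∇_x G(x, θ*_γ(x,y)), (y − θ*_γ(x,y))/γ)`, where `θ*_γ(x,y)` is the unique
minimizer of `θ ↦ G(x,θ) + ‖θ − y‖²/(2γ)` (here given by the map `θs`, characterized as the
unique minimizer by the hypothesis `hθs`). -/
theorem moreau_differentiable_gradient {dx dy : ℕ} (L₂ γ : ℝ) (hL₂ : 0 < L₂)
    (G : Euc dx → Euc dy → ℝ) (hG : LSmooth L₂ G)
    (hγ0 : 0 < γ) (hγ : γ < 1 / (2 * L₂))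
    (θs : Euc dx → Euc dy → Euc dy)
    (hθs : ∀ x y θ, θ ≠ θs x y →
      G x (θs x y) + ‖θs x y - y‖ ^ 2 / (2 * γ) < G x θ + ‖θ - y‖ ^ 2 / (2 * γ)) :
    ∀ (x : Euc dx) (y : Euc dy),
      HasFDerivAt (fun p : Euc dx × Euc dy => moreau G γ p.1 p.2)
        ((innerSL ℝ (gradx G x (θs x y))).comp
            (ContinuousLinearMap.fst ℝ (Euc dx) (Euc dy)) +
          (innerSL ℝ (γ⁻¹ • (y - θs x y))).comp
            (ContinuousLinearMap.snd ℝ (Euc dx) (Euc dy)))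
        (x, y) := by
  obtain ⟨hGdx, hGdy, hGlip⟩ := hG
  have hγinv : 2 * L₂ < γ⁻¹ := by
    rw [← one_div]
    rw [lt_div_iff₀ hγ0]
    have h1 : γ * (2 * L₂) < 1 := by
      have := (lt_div_iff₀ (by positivity : (0:ℝ) < 2 * L₂)).1 hγ
      linarith
    linarith
  have hγinv0 : 0 < γ⁻¹ := inv_pos.2 hγ0
  -- componentwise Lipschitz bounds
  have hx_lip : ∀ x y x' y', ‖gradx G x y - gradx G x' y'‖ ≤ L₂ * (‖x - x'‖ + ‖y - y'‖) := by
    intro x y x' y'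
    calc ‖gradx G x y - gradx G x' y'‖ ≤ pnorm (gradx G x y - gradx G x' y')
          (grady G x y - grady G x' y') := aux_le_pnorm_left _ _
      _ ≤ L₂ * pnorm (x - x') (y - y') := hGlip x y x' y'
      _ ≤ L₂ * (‖x - x'‖ + ‖y - y'‖) := by
          have := aux_pnorm_le (x - x') (y - y')
          nlinarith
  have hy_lip : ∀ x y x' y', ‖grady G x y - grady G x' y'‖ ≤ L₂ * (‖x - x'‖ + ‖y - y'‖) := by
    intro x y x' y'
    calc ‖grady G x y - grady G x' y'‖ ≤ pnorm (gradx G x y - gradx G x' y')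
          (grady G x y - grady G x' y') := aux_le_pnorm_right _ _
      _ ≤ L₂ * pnorm (x - x') (y - y') := hGlip x y x' y'
      _ ≤ L₂ * (‖x - x'‖ + ‖y - y'‖) := by
          have := aux_pnorm_le (x - x') (y - y')
          nlinarith
  -- the minimizer property
  have hmin : ∀ x y θ, G x (θs x y) + ‖θs x y - y‖ ^ 2 / (2 * γ) ≤
      G x θ + ‖θ - y‖ ^ 2 / (2 * γ) := by
    intro x y θ
    by_cases h : θ = θs x y
    · subst h; exact le_refl _
    · exact le_of_lt (hθs x y θ h)
  have hbdd : ∀ x y, BddBelow (Set.range fun θ => G x θ + ‖θ - y‖ ^ 2 / (2 * γ)) := by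
    intro x y
    exact ⟨G x (θs x y) + ‖θs x y - y‖ ^ 2 / (2 * γ), by
      rintro _ ⟨θ, rfl⟩; exact hmin x y θ⟩
  have hVeq : ∀ x y, moreau G γ x y = G x (θs x y) + ‖θs x y - y‖ ^ 2 / (2 * γ) := by
    intro x y
    refine le_antisymm (ciInf_le (hbdd x y) _) (le_ciInf (hmin x y))
  have hV_le : ∀ x y θ, moreau G γ x y ≤ G x θ + ‖θ - y‖ ^ 2 / (2 * γ) := by
    intro x y θ
    exact ciInf_le (hbdd x y) θ
  -- first-order optimality
  have hopt : ∀ x y, grady G x (θs x y) = γ⁻¹ • (y - θs x y) := by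
    intro x y
    have hlocal : IsLocalMin (fun θ => G x θ + ‖θ - y‖ ^ 2 / (2 * γ)) (θs x y) :=
      Filter.Eventually.of_forall (fun θ => hmin x y θ)
    have hder := aux_hasFDerivAt_obj (fun θ => G x θ) (hGdy x) γ y (θs x y)
    have hzero := hlocal.hasFDerivAt_eq_zero hder
    set w := gradient (fun θ => G x θ) (θs x y) + γ⁻¹ • (θs x y - y) with hw
    have hw0 : w = 0 := by
      have h1 : (innerSL ℝ w) w = (0 : Euc dy →L[ℝ] ℝ) w := by rw [hzero]
      simp only [innerSL_apply_apply, ContinuousLinearMap.zero_apply] at h1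
      exact inner_self_eq_zero.1 h1
    have : gradient (fun θ => G x θ) (θs x y) = -(γ⁻¹ • (θs x y - y)) :=
      eq_neg_of_add_eq_zero_left hw0
    rw [grady, this, ← smul_neg, neg_sub]
  -- Lipschitz continuity of the minimizer
  set K : ℝ := (γ⁻¹ + L₂) / L₂ with hK
  have hK0 : 0 ≤ K := by positivity
  have hθlip : ∀ x y x' y', ‖θs x' y' - θs x y‖ ≤ K * (‖x' - x‖ + ‖y' - y‖) := by
    intro x y x' y'
    set θ := θs x y
    set θ' := θs x' y'
    set δ := θ' - θ with hδ
    by_cases hd0 : δ = 0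
    · rw [hd0]; simp; positivity
    have hgd : grady G x' θ' - grady G x θ = γ⁻¹ • ((y' - y) - δ) := by
      rw [hopt x y, hopt x' y', ← smul_sub]
      congr 1
      simp only [hδ]; abel
    have hip : ⟪grady G x' θ' - grady G x θ, δ⟫ = γ⁻¹ * ⟪y' - y, δ⟫ - γ⁻¹ * ‖δ‖ ^ 2 := by
      rw [hgd, real_inner_smul_left, inner_sub_left, real_inner_self_eq_norm_sq]
      ring
    have hcs1 : |⟪grady G x' θ' - grady G x θ, δ⟫| ≤ L₂ * (‖x' - x‖ + ‖δ‖) * ‖δ‖ := by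
      calc |⟪grady G x' θ' - grady G x θ, δ⟫| ≤ ‖grady G x' θ' - grady G x θ‖ * ‖δ‖ :=
            abs_real_inner_le_norm _ _
        _ ≤ L₂ * (‖x' - x‖ + ‖δ‖) * ‖δ‖ := by
            have := hy_lip x' θ' x θ
            have hδn : ‖θ' - θ‖ = ‖δ‖ := rfl
            nlinarith [norm_nonneg δ]
    have hcs2 : |⟪y' - y, δ⟫| ≤ ‖y' - y‖ * ‖δ‖ := abs_real_inner_le_norm _ _
    have hkey : γ⁻¹ * ‖δ‖ ^ 2 ≤ γ⁻¹ * ‖y' - y‖ * ‖δ‖ + L₂ * ‖x' - x‖ * ‖δ‖ + L₂ * ‖δ‖ ^ 2 := by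
      have h1 := abs_le.1 hcs1
      have h2 := abs_le.1 hcs2
      nlinarith [norm_nonneg δ, sq_nonneg ‖δ‖]
    have hδpos : 0 < ‖δ‖ := norm_pos_iff.2 hd0
    have hmain : L₂ * ‖δ‖ ≤ γ⁻¹ * ‖y' - y‖ + L₂ * ‖x' - x‖ := by
      nlinarith [sq_nonneg ‖δ‖]
    have : ‖δ‖ ≤ (γ⁻¹ * ‖y' - y‖ + L₂ * ‖x' - x‖) / L₂ := by
      rw [le_div_iff₀ hL₂]; linarith [hmain]
    refine this.trans ?_
    rw [div_le_iff₀ hL₂]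
    have hKL : K * L₂ = γ⁻¹ + L₂ := by
      show (γ⁻¹ + L₂) / L₂ * L₂ = γ⁻¹ + L₂
      exact div_mul_cancel₀ _ hL₂.ne'
    have h1 : K * (‖x' - x‖ + ‖y' - y‖) * L₂ = (γ⁻¹ + L₂) * (‖x' - x‖ + ‖y' - y‖) := by
      rw [mul_right_comm, hKL]
    rw [h1]
    nlinarith [norm_nonneg (x' - x), norm_nonneg (y' - y)]
  -- main part
  intro x y
  set θ0 := θs x y with hθ0
  set g1 := gradx G x θ0 with hg1
  set g2 := γ⁻¹ • (y - θ0) with hg2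
  set C : ℝ := (L₂ + γ⁻¹) * (1 + 2 * K) + L₂ + (2 * γ)⁻¹ with hC
  have hC0 : 0 < C := by positivity
  have key : ∀ q : Euc dx × Euc dy,
      |moreau G γ (x + q.1) (y + q.2) - moreau G γ x y - (⟪g1, q.1⟫ + ⟪g2, q.2⟫)| ≤
        C * ‖q‖ ^ 2 := by
    intro q
    set u := q.1
    set v := q.2
    set x' := x + u with hx'
    set y' := y + v with hy'
    set θ1 := θs x' y' with hθ1
    set g1' := gradx G x' θ1 with hg1'
    set g2' := γ⁻¹ • (y' - θ1) with hg2'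
    have ha : ‖u‖ ≤ ‖q‖ := norm_fst_le q
    have hb : ‖v‖ ≤ ‖q‖ := norm_snd_le q
    have hq0 : 0 ≤ ‖q‖ := norm_nonneg q
    -- quadratic expansions in x
    have hxx : x' - x = u := by rw [hx']; abel
    have E1 : |G x' θ0 - G x θ0 - ⟪g1, u⟫| ≤ L₂ * ‖u‖ ^ 2 := by
      have hq := aux_quad_bound (fun z => G z θ0) L₂ hL₂.le x x' (hGdx θ0)
        (fun z => by
          show ‖gradx G z θ0 - gradx G x θ0‖ ≤ L₂ * ‖z - x‖
          simpa using hx_lip z θ0 x θ0)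
      rw [hxx] at hq
      exact hq
    have hxx' : x - x' = -u := by rw [hx']; abel
    have E3 : |G x θ1 - G x' θ1 - ⟪g1', -u⟫| ≤ L₂ * ‖u‖ ^ 2 := by
      have hq := aux_quad_bound (fun z => G z θ1) L₂ hL₂.le x' x (hGdx θ1)
        (fun z => by
          show ‖gradx G z θ1 - gradx G x' θ1‖ ≤ L₂ * ‖z - x'‖
          simpa using hx_lip z θ1 x' θ1)
      rw [hxx', norm_neg] at hq
      exact hq
    -- exact expansions in y
    have E2 : ‖θ0 - y'‖ ^ 2 / (2 * γ) = ‖θ0 - y‖ ^ 2 / (2 * γ) + ⟪g2, v⟫ + ‖v‖ ^ 2 / (2 * γ) := by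
      have h1 : θ0 - y' = (θ0 - y) - v := by rw [hy']; abel
      rw [h1, aux_sq_expand_sub γ hγ0.ne' (θ0 - y) v]
      have h2 : (⟪g2, v⟫ : ℝ) = -(γ⁻¹ * ⟪θ0 - y, v⟫) := by
        rw [hg2, real_inner_smul_left, show (y - θ0) = -(θ0 - y) by abel, inner_neg_left]
        ring
      rw [h2]; ring
    have E4 : ‖θ1 - y‖ ^ 2 / (2 * γ) = ‖θ1 - y'‖ ^ 2 / (2 * γ) - ⟪g2', v⟫ + ‖v‖ ^ 2 / (2 * γ) := by
      have h1 : θ1 - y = (θ1 - y') + v := by rw [hy']; abel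
      rw [h1, aux_sq_expand_add γ hγ0.ne' (θ1 - y') v]
      have h2 : (⟪g2', v⟫ : ℝ) = -(γ⁻¹ * ⟪θ1 - y', v⟫) := by
        rw [hg2', real_inner_smul_left, show (y' - θ1) = -(θ1 - y') by abel, inner_neg_left]
        ring
      rw [h2]; ring
    -- upper bound
    have hup : moreau G γ x' y' - moreau G γ x y - (⟪g1, u⟫ + ⟪g2, v⟫) ≤
        L₂ * ‖u‖ ^ 2 + ‖v‖ ^ 2 / (2 * γ) := by
      have h1 := hV_le x' y' θ0
      have h2 := hVeq x y
      rw [← hθ0] at h2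
      have h3 := abs_le.1 E1
      linarith [h3.2, E2.le, E2.ge]
    -- lower bound
    have hlo : ⟪g1' - g1, u⟫ + ⟪g2' - g2, v⟫ - (L₂ * ‖u‖ ^ 2 + ‖v‖ ^ 2 / (2 * γ)) ≤
        moreau G γ x' y' - moreau G γ x y - (⟪g1, u⟫ + ⟪g2, v⟫) := by
      have h1 := hV_le x y θ1
      have h2 := hVeq x' y'
      rw [← hθ1] at h2
      have h3 := abs_le.1 E3
      have h4 : (⟪g1', -u⟫ : ℝ) = -⟪g1', u⟫ := inner_neg_right _ _
      have h5 : (⟪g1' - g1, u⟫ : ℝ) = ⟪g1', u⟫ - ⟪g1, u⟫ := inner_sub_left _ _ _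
      have h6 : (⟪g2' - g2, v⟫ : ℝ) = ⟪g2', v⟫ - ⟪g2, v⟫ := inner_sub_left _ _ _
      rw [h4] at h3
      linarith [h3.1, E4.le]
    -- bounding the cross terms
    have hθd : ‖θ1 - θ0‖ ≤ 2 * K * ‖q‖ := by
      have := hθlip x y x' y'
      have hxx : ‖x' - x‖ = ‖u‖ := by rw [hx', show x + u - x = u by abel]
      have hyy : ‖y' - y‖ = ‖v‖ := by rw [hy', show y + v - y = v by abel]
      rw [hxx, hyy] at this
      nlinarith
    have hg1d : ‖g1' - g1‖ ≤ L₂ * (1 + 2 * K) * ‖q‖ := by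
      have := hx_lip x' θ1 x θ0
      have hxx : ‖x' - x‖ = ‖u‖ := by rw [hx', show x + u - x = u by abel]
      rw [hxx] at this
      have hθθ : ‖θ1 - θ0‖ ≤ 2 * K * ‖q‖ := hθd
      calc ‖g1' - g1‖ ≤ L₂ * (‖u‖ + ‖θ1 - θ0‖) := this
        _ ≤ L₂ * (1 + 2 * K) * ‖q‖ := by nlinarith
    have hg2d : ‖g2' - g2‖ ≤ γ⁻¹ * (1 + 2 * K) * ‖q‖ := by
      have heq : g2' - g2 = γ⁻¹ • ((y' - θ1) - (y - θ0)) := by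
        rw [hg2', hg2, ← smul_sub]
      have h2 : (y' - θ1) - (y - θ0) = v - (θ1 - θ0) := by rw [hy']; abel
      rw [heq, h2, norm_smul]
      simp only [Real.norm_eq_abs, abs_of_pos hγinv0]
      have : ‖v - (θ1 - θ0)‖ ≤ ‖v‖ + ‖θ1 - θ0‖ := norm_sub_le _ _
      nlinarith [hθd]
    have hc1 : |⟪g1' - g1, u⟫| ≤ L₂ * (1 + 2 * K) * ‖q‖ * ‖q‖ := by
      calc |⟪g1' - g1, u⟫| ≤ ‖g1' - g1‖ * ‖u‖ := abs_real_inner_le_norm _ _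
        _ ≤ L₂ * (1 + 2 * K) * ‖q‖ * ‖q‖ :=
            mul_le_mul hg1d ha (norm_nonneg u)
              (mul_nonneg (mul_nonneg hL₂.le (by linarith)) hq0)
    have hc2 : |⟪g2' - g2, v⟫| ≤ γ⁻¹ * (1 + 2 * K) * ‖q‖ * ‖q‖ := by
      calc |⟪g2' - g2, v⟫| ≤ ‖g2' - g2‖ * ‖v‖ := abs_real_inner_le_norm _ _
        _ ≤ γ⁻¹ * (1 + 2 * K) * ‖q‖ * ‖q‖ :=
            mul_le_mul hg2d hb (norm_nonneg v)
              (mul_nonneg (mul_nonneg hγinv0.le (by linarith)) hq0)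
    rw [abs_le, hC]
    have h2γ : (0:ℝ) < (2 * γ)⁻¹ := by positivity
    have hu2 : ‖u‖ ^ 2 ≤ ‖q‖ ^ 2 := pow_le_pow_left₀ (norm_nonneg u) ha 2
    have hv2 : ‖v‖ ^ 2 ≤ ‖q‖ ^ 2 := pow_le_pow_left₀ (norm_nonneg v) hb 2
    have hquad : L₂ * ‖u‖ ^ 2 + ‖v‖ ^ 2 / (2 * γ) ≤ L₂ * ‖q‖ ^ 2 + (2 * γ)⁻¹ * ‖q‖ ^ 2 := by
      have ha1 := mul_le_mul_of_nonneg_left hu2 hL₂.le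
      have ha2 := mul_le_mul_of_nonneg_left hv2 h2γ.le
      rw [div_eq_inv_mul]
      linarith
    constructor
    · have h1 := (abs_le.1 hc1).1
      have h2 := (abs_le.1 hc2).1
      linarith [hlo, hquad]
    · have hpos : 0 ≤ (L₂ + γ⁻¹) * (1 + 2 * K) * ‖q‖ ^ 2 :=
        mul_nonneg (mul_nonneg (by linarith) (by linarith)) (sq_nonneg _)
      linarith [hup, hquad, hpos]
  -- conclude
  rw [hasFDerivAt_iff_isLittleO_nhds_zero]
  rw [Asymptotics.isLittleO_iff]
  intro c hc
  have hball : Metric.ball (0 : Euc dx × Euc dy) (c / C) ∈ nhds (0 : Euc dx × Euc dy) :=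
    Metric.ball_mem_nhds _ (by positivity)
  filter_upwards [hball] with q hq
  have hqn : ‖q‖ < c / C := by
    rwa [Metric.mem_ball, dist_zero_right] at hq
  have hk := key q
  have hDq : ((innerSL ℝ g1).comp (ContinuousLinearMap.fst ℝ (Euc dx) (Euc dy)) +
      (innerSL ℝ g2).comp (ContinuousLinearMap.snd ℝ (Euc dx) (Euc dy))) q =
      ⟪g1, q.1⟫ + ⟪g2, q.2⟫ := by
    simp
  have hval : (fun p : Euc dx × Euc dy => moreau G γ p.1 p.2) ((x, y) + q) =
      moreau G γ (x + q.1) (y + q.2) := rfl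
  rw [Real.norm_eq_abs]
  have : |moreau G γ (x + q.1) (y + q.2) - moreau G γ x y - (⟪g1, q.1⟫ + ⟪g2, q.2⟫)| ≤
      C * ‖q‖ ^ 2 := hk
  calc |(fun p : Euc dx × Euc dy => moreau G γ p.1 p.2) ((x, y) + q) -
        (fun p : Euc dx × Euc dy => moreau G γ p.1 p.2) (x, y) -
        ((innerSL ℝ g1).comp (ContinuousLinearMap.fst ℝ (Euc dx) (Euc dy)) +
          (innerSL ℝ g2).comp (ContinuousLinearMap.snd ℝ (Euc dx) (Euc dy))) q| =
      |moreau G γ (x + q.1) (y + q.2) - moreau G γ x y - (⟪g1, q.1⟫ + ⟪g2, q.2⟫)| := by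
        rw [hval, hDq]
    _ ≤ C * ‖q‖ ^ 2 := hk
    _ ≤ c * ‖q‖ := by
        have h1 : ‖q‖ * C < c := (lt_div_iff₀ hC0).1 hqn
        calc C * ‖q‖ ^ 2 = (‖q‖ * C) * ‖q‖ := by ring
          _ ≤ c * ‖q‖ := mul_le_mul_of_nonneg_right h1.le (norm_nonneg q)
end
end

section
/- Let F : ℝ^{d_x} × ℝ^{d_y} → ℝ be L₁-smooth and bounded below by F̲, let G : ℝ^{d_x} × ℝ^{d_y} → ℝ be L₂-smooth with L₂ > 0, let γ ∈ (0, 1/(2L₂)), and let μ ≥ 0. Then the function Φ_μ(x,y) := μ(F(x,y) − F̲) + G(x,y) − V_γ(x,y) is L_Φ-smooth with L_Φ := μL₁ + L₂ + max{L₂, 1/γ}. -/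
open scoped RealInnerProductSpace

noncomputable section

open InnerProductSpace Set

variable {dx dy d : ℕ}

lemma pnorm_nonneg (a : Euc dx) (b : Euc dy) : 0 ≤ pnorm a b := Real.sqrt_nonneg _

lemma pnorm_sq (a : Euc dx) (b : Euc dy) : pnorm a b ^ 2 = ‖a‖ ^ 2 + ‖b‖ ^ 2 :=
  Real.sq_sqrt (by positivity)

lemma norm_fst_le_pnorm (a : Euc dx) (b : Euc dy) : ‖a‖ ≤ pnorm a b := by
  rw [show ‖a‖ = Real.sqrt (‖a‖^2) by rw [Real.sqrt_sq (norm_nonneg a)]]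
  exact Real.sqrt_le_sqrt (by nlinarith [sq_nonneg ‖b‖])

lemma norm_snd_le_pnorm (a : Euc dx) (b : Euc dy) : ‖b‖ ≤ pnorm a b := by
  rw [show ‖b‖ = Real.sqrt (‖b‖^2) by rw [Real.sqrt_sq (norm_nonneg b)]]
  exact Real.sqrt_le_sqrt (by nlinarith [sq_nonneg ‖a‖])

lemma pnorm_zero_right (a : Euc dx) : pnorm a (0 : Euc dy) = ‖a‖ := by
  simp [pnorm, Real.sqrt_sq (norm_nonneg a)]

lemma pnorm_zero_left (b : Euc dy) : pnorm (0 : Euc dx) b = ‖b‖ := by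
  simp [pnorm, Real.sqrt_sq (norm_nonneg b)]

lemma pnorm_add_le (a c : Euc dx) (b d : Euc dy) :
    pnorm (a + c) (b + d) ≤ pnorm a b + pnorm c d := by
  have h1 : ‖a + c‖ ≤ ‖a‖ + ‖c‖ := norm_add_le _ _
  have h2 : ‖b + d‖ ≤ ‖b‖ + ‖d‖ := norm_add_le _ _
  have key : ‖a‖ * ‖c‖ + ‖b‖ * ‖d‖ ≤ pnorm a b * pnorm c d := by
    have : (‖a‖ * ‖c‖ + ‖b‖ * ‖d‖)^2 ≤ (‖a‖^2 + ‖b‖^2) * (‖c‖^2 + ‖d‖^2) := by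
      nlinarith [sq_nonneg (‖a‖*‖d‖ - ‖b‖*‖c‖)]
    calc ‖a‖ * ‖c‖ + ‖b‖ * ‖d‖ ≤ Real.sqrt ((‖a‖ * ‖c‖ + ‖b‖ * ‖d‖)^2) := by
          rw [Real.sqrt_sq (by positivity)]
      _ ≤ Real.sqrt ((‖a‖^2 + ‖b‖^2) * (‖c‖^2 + ‖d‖^2)) := Real.sqrt_le_sqrt this
      _ = pnorm a b * pnorm c d := by rw [Real.sqrt_mul (by positivity), pnorm, pnorm]
  have : pnorm (a+c) (b+d) ^ 2 ≤ (pnorm a b + pnorm c d)^2 := by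
    rw [pnorm_sq]
    have e1 : ‖a+c‖^2 ≤ (‖a‖+‖c‖)^2 := by nlinarith [norm_nonneg (a+c), norm_nonneg a, norm_nonneg c]
    have e2 : ‖b+d‖^2 ≤ (‖b‖+‖d‖)^2 := by nlinarith [norm_nonneg (b+d), norm_nonneg b, norm_nonneg d]
    nlinarith [pnorm_sq a b, pnorm_sq c d]
  calc pnorm (a+c) (b+d) = Real.sqrt (pnorm (a+c) (b+d) ^ 2) := by
        rw [Real.sqrt_sq (pnorm_nonneg _ _)]
    _ ≤ Real.sqrt ((pnorm a b + pnorm c d)^2) := Real.sqrt_le_sqrt this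
    _ = pnorm a b + pnorm c d := Real.sqrt_sq (add_nonneg (pnorm_nonneg _ _) (pnorm_nonneg _ _))

lemma pnorm_smul (μ : ℝ) (hμ : 0 ≤ μ) (a : Euc dx) (b : Euc dy) :
    pnorm (μ • a) (μ • b) = μ * pnorm a b := by
  simp only [pnorm, norm_smul, Real.norm_eq_abs, abs_of_nonneg hμ, mul_pow]
  rw [← mul_add, Real.sqrt_mul (by positivity), Real.sqrt_sq hμ]

lemma pnorm_neg (a : Euc dx) (b : Euc dy) : pnorm (-a) (-b) = pnorm a b := by
  simp [pnorm]

lemma pnorm_le_of_le {a : Euc dx} {b : Euc dy} {c e : ℝ} (h1 : ‖a‖ ≤ c) (h2 : ‖b‖ ≤ e)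
    (hc : 0 ≤ c) (he : 0 ≤ e) : pnorm a b ≤ Real.sqrt (c^2 + e^2) :=
  Real.sqrt_le_sqrt (by nlinarith [norm_nonneg a, norm_nonneg b])

variable {d : ℕ}


lemma hasGradientAt_of_quad {f : Euc d → ℝ} {a x₀ : Euc d} {C : ℝ}
    (h : ∀ x, |f x - f x₀ - ⟪a, x - x₀⟫| ≤ C * ‖x - x₀‖^2) : HasGradientAt f a x₀ := by
  rw [hasGradientAt_iff_isLittleO]
  have h1 : (fun x' => f x' - f x₀ - ⟪a, x' - x₀⟫) =O[nhds x₀] fun x' => ‖x' - x₀‖^2 := by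
    rw [Asymptotics.isBigO_iff]
    refine ⟨C, Filter.Eventually.of_forall fun x => ?_⟩
    simpa [abs_of_nonneg (sq_nonneg ‖x - x₀‖)] using h x
  have h2 : (fun x' : Euc d => ‖x' - x₀‖^2) =o[nhds x₀] fun x' => x' - x₀ := by
    have hl := Asymptotics.isLittleO_norm_pow_id (E' := Euc d) (n := 2) one_lt_two
    have ht : Filter.Tendsto (fun x' : Euc d => x' - x₀) (nhds x₀) (nhds 0) := by
      simpa using Filter.Tendsto.sub_const (Filter.tendsto_id (x := nhds x₀)) x₀
    exact hl.comp_tendsto ht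
  exact h1.trans_isLittleO h2

lemma descent_abs {g : Euc d → ℝ} {K : ℝ} (hK : 0 ≤ K) (hg : Differentiable ℝ g)
    (hlip : ∀ p q, ‖gradient g p - gradient g q‖ ≤ K * ‖p - q‖) (a b : Euc d) :
    |g b - g a - ⟪gradient g a, b - a⟫| ≤ K * ‖b - a‖^2 := by
  set φ : Euc d → ℝ := fun x => g x - ⟪gradient g a, x⟫ with hφ
  have hfd : ∀ x, HasFDerivAt φ (toDual ℝ (Euc d) (gradient g x) - toDual ℝ (Euc d) (gradient g a)) x := by
    intro x
    exact ((hg x).hasGradientAt.hasFDerivAt).sub ((toDual ℝ (Euc d) (gradient g a)).hasFDerivAt)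
  have key : ‖φ b - φ a‖ ≤ (K * ‖b - a‖) * ‖b - a‖ := by
    refine (convex_closedBall a ‖b - a‖).norm_image_sub_le_of_norm_hasFDerivWithin_le
      (fun x _ => (hfd x).hasFDerivWithinAt) (fun x hx => ?_) (Metric.mem_closedBall_self (norm_nonneg _))
      ?_
    · rw [← (toDual ℝ (Euc d)).map_sub, (toDual ℝ (Euc d)).norm_map]
      calc ‖gradient g x - gradient g a‖ ≤ K * ‖x - a‖ := hlip x a
        _ ≤ K * ‖b - a‖ := by
            have hxa : ‖x - a‖ ≤ ‖b - a‖ := by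
              simpa [dist_eq_norm] using hx
            nlinarith
    · simpa [dist_eq_norm] using le_refl ‖b - a‖
  have : φ b - φ a = g b - g a - ⟪gradient g a, b - a⟫ := by
    simp only [hφ, inner_sub_right]
    ring
  rw [this] at key
  calc |g b - g a - ⟪gradient g a, b - a⟫| = ‖g b - g a - ⟪gradient g a, b - a⟫‖ := (Real.norm_eq_abs _).symm
    _ ≤ K * ‖b - a‖ * ‖b - a‖ := key
    _ = K * ‖b - a‖^2 := by ring

lemma hasGradientAt_quad {γ : ℝ} (hγ : 0 < γ) (y θ₀ : Euc d) :
    HasGradientAt (fun θ => ‖θ - y‖^2 / (2*γ)) (γ⁻¹ • (θ₀ - y)) θ₀ := by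
  apply hasGradientAt_of_quad (C := (2*γ)⁻¹)
  intro x
  have hexp : ‖x - y‖^2 = ‖θ₀ - y‖^2 + 2 * ⟪θ₀ - y, x - θ₀⟫ + ‖x - θ₀‖^2 := by
    have := norm_add_sq_real (θ₀ - y) (x - θ₀)
    rw [show θ₀ - y + (x - θ₀) = x - y by abel] at this
    linarith
  rw [real_inner_smul_left]
  have hkey : ‖x - y‖^2 / (2*γ) - ‖θ₀ - y‖^2 / (2*γ) - γ⁻¹ * ⟪θ₀ - y, x - θ₀⟫ =
      (2*γ)⁻¹ * ‖x - θ₀‖^2 := by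
    rw [hexp]
    set A := ‖θ₀ - y‖^2
    set B := ⟪θ₀ - y, x - θ₀⟫_ℝ
    set D := ‖x - θ₀‖^2
    field_simp
    ring
  rw [hkey, abs_of_nonneg (by positivity)]


lemma HasGradientAt.add' {f g : Euc d → ℝ} {a b x : Euc d}
    (hf : HasGradientAt f a x) (hg : HasGradientAt g b x) :
    HasGradientAt (fun z => f z + g z) (a + b) x := by
  rw [hasGradientAt_iff_hasFDerivAt] at *
  rw [map_add]
  exact hf.add hg

lemma HasGradientAt.sub' {f g : Euc d → ℝ} {a b x : Euc d}
    (hf : HasGradientAt f a x) (hg : HasGradientAt g b x) :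
    HasGradientAt (fun z => f z - g z) (a - b) x := by
  rw [hasGradientAt_iff_hasFDerivAt] at *
  rw [map_sub]
  exact hf.sub hg

lemma HasGradientAt.const_mul_sub {f : Euc d → ℝ} {a x : Euc d} (μ c : ℝ)
    (hf : HasGradientAt f a x) :
    HasGradientAt (fun z => μ * (f z - c)) (μ • a) x := by
  rw [hasGradientAt_iff_hasFDerivAt] at *
  have := (hf.sub_const c).const_mul μ
  convert this using 1
  ext v
  simp [toDual_apply_apply, real_inner_smul_left]
  ext v
  simp [toDual_apply_apply, real_inner_smul_left]

section core
variable {dx dy : ℕ} {L₂ γ : ℝ} {G : Euc dx → Euc dy → ℝ}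

lemma lip_grady_y (hG : LSmooth L₂ G) (x : Euc dx) (θ θ' : Euc dy) :
    ‖grady G x θ - grady G x θ'‖ ≤ L₂ * ‖θ - θ'‖ := by
  have h := hG.2.2 x θ x θ'
  rw [sub_self, pnorm_zero_left] at h
  exact (norm_snd_le_pnorm _ _).trans h

lemma lip_gradx_x (hG : LSmooth L₂ G) (θ : Euc dy) (x x' : Euc dx) :
    ‖gradx G x θ - gradx G x' θ‖ ≤ L₂ * ‖x - x'‖ := by
  have h := hG.2.2 x θ x' θ
  rw [sub_self, pnorm_zero_right] at h
  exact (norm_fst_le_pnorm _ _).trans h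

lemma exists_argmin (hG : LSmooth L₂ G) (hγ0 : 0 < γ) (hL2 : 0 ≤ L₂) (hhalf : L₂ < 1/(2*γ))
    (x : Euc dx) (y : Euc dy) :
    ∃ θ, ∀ θ', G x θ + ‖θ - y‖^2/(2*γ) ≤ G x θ' + ‖θ' - y‖^2/(2*γ) := by
  set f : Euc dy → ℝ := fun θ => G x θ + ‖θ - y‖^2/(2*γ) with hf
  have hcont : Continuous f := by
    have h1 : Continuous fun θ => G x θ := (hG.2.1 x).continuous
    fun_prop
  apply hcont.exists_forall_le' y
  set dvec := grady G x y with hd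
  have hcpos : (0:ℝ) < 1/(2*γ) - L₂ := sub_pos.mpr hhalf
  set c : ℝ := 1/(2*γ) - L₂ with hc
  set R : ℝ := ‖dvec‖/c + 1 with hR
  rw [Filter.eventually_iff, Filter.mem_cocompact]
  refine ⟨Metric.closedBall y R, isCompact_closedBall y R, fun θ hθ => ?_⟩
  simp only [Set.mem_compl_iff, Metric.mem_closedBall, not_le] at hθ
  have hr : R < ‖θ - y‖ := by rwa [dist_eq_norm] at hθ
  have hdesc := descent_abs hL2 (hG.2.1 x)
      (fun p q => lip_grady_y hG x p q) y θ
  have hgr : gradient (fun θ' => G x θ') y = dvec := rfl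
  rw [hgr] at hdesc
  have hip : ⟪dvec, θ - y⟫_ℝ ≥ -(‖dvec‖ * ‖θ - y‖) := by
    have := abs_real_inner_le_norm dvec (θ - y)
    cases abs_le.mp this with
    | intro h1 h2 => linarith
  have hlow : G x θ ≥ G x y - ‖dvec‖ * ‖θ - y‖ - L₂ * ‖θ - y‖^2 := by
    cases abs_le.mp hdesc with
    | intro h1 h2 => nlinarith
  show f y ≤ f θ
  have hkey : c * ‖θ - y‖ - ‖dvec‖ ≥ c := by
    have hcR : c * R = ‖dvec‖ + c := by
      rw [hR, mul_add, mul_one, mul_div_cancel₀ _ (ne_of_gt hcpos)]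
    nlinarith
  have hnn : (0:ℝ) ≤ ‖θ - y‖ := norm_nonneg _
  have hsq : ‖θ - y‖^2/(2*γ) = (1/(2*γ)) * ‖θ - y‖^2 := by ring
  have hyy : ‖y - y‖^2/(2*γ) = 0 := by simp
  have hmain : f θ - f y ≥ ‖θ - y‖ * (c * ‖θ - y‖ - ‖dvec‖) := by
    simp only [hf, hyy, hc]
    rw [hsq]
    nlinarith [hlow]
  have h0 : 0 ≤ ‖θ - y‖ * (c * ‖θ - y‖ - ‖dvec‖) :=
    mul_nonneg hnn (hcpos.le.trans hkey)
  linarith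

lemma scalar_key {γ L na nb nu nw ip : ℝ} (hγ : 0 < γ) (hL : 0 < L) (ht : γ*L < 1/2)
    (hna : 0 ≤ na) (hnb : 0 ≤ nb) (hnu : 0 ≤ nu) (hnw : 0 ≤ nw)
    (hsq : na^2 + nb^2 ≤ L^2*(nu^2+nw^2)) (hip : -(nw*nb) ≤ ip) :
    γ^2*(na^2+nb^2) ≤ nu^2 + (nw^2 + 2*γ*ip + γ^2*nb^2) := by
  have htpos : 0 < γ*L := mul_pos hγ hL
  have hq : (0:ℝ) ≤ nu^2+nw^2 := by positivity
  have c1 : γ^2*na^2 + γ^2*nb^2 ≤ (γ*L)^2*(nu^2+nw^2) := by nlinarith [sq_nonneg γ]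
  have c2 : 2*(γ*L)*(γ*nb)*nw ≤ γ^2*nb^2 + (γ*L)^2*nw^2 := by
    nlinarith [sq_nonneg (γ*nb - γ*L*nw)]
  have c3 : 0 ≤ (γ*L)*(1-2*(γ*L))*(nu^2+nw^2) :=
    mul_nonneg (mul_nonneg htpos.le (by linarith)) hq
  have c4 : 0 ≤ (1-(γ*L))*(γ^2*na^2) := mul_nonneg (by linarith) (by positivity)
  have c5 : 0 ≤ (γ*L)^2*nu^2 := by positivity
  have c6 : -(2*γ*(γ*L)*(nw*nb)) ≤ 2*γ*(γ*L)*ip := by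
    have h := mul_le_mul_of_nonneg_left hip (by positivity : (0:ℝ) ≤ 2*γ*(γ*L))
    nlinarith [h]
  have main : 0 ≤ (γ*L) * ((nu^2 + nw^2 + 2*γ*ip) - γ^2*na^2) := by nlinarith
  have main2 : 0 ≤ (nu^2 + nw^2 + 2*γ*ip) - γ^2*na^2 := by
    by_contra hcon
    push_neg at hcon
    nlinarith [mul_pos htpos (by linarith : 0 < γ^2*na^2 - (nu^2 + nw^2 + 2*γ*ip))]
  linarith

lemma pnorm_le_of_mul_sq {dx dy : ℕ} {a u : Euc dx} {b v : Euc dy} {γ : ℝ} (hγ : 0 < γ)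
    (h : γ^2*(‖a‖^2+‖b‖^2) ≤ ‖u‖^2+‖v‖^2) : pnorm a b ≤ γ⁻¹ * pnorm u v := by
  have hγ2 : (0:ℝ) < γ^2 := by positivity
  have h2 : ‖a‖^2+‖b‖^2 ≤ (γ⁻¹)^2 * (‖u‖^2+‖v‖^2) := by
    rw [inv_pow, inv_mul_eq_div, le_div_iff₀ hγ2]
    nlinarith
  calc pnorm a b = Real.sqrt (‖a‖^2 + ‖b‖^2) := rfl
    _ ≤ Real.sqrt ((γ⁻¹)^2 * (‖u‖^2+‖v‖^2)) := Real.sqrt_le_sqrt h2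
    _ = γ⁻¹ * pnorm u v := by
        rw [Real.sqrt_mul (by positivity), Real.sqrt_sq (by positivity)]
        rfl

set_option maxHeartbeats 2000000 in
lemma moreau_core (hG : LSmooth L₂ G) (hγ0 : 0 < γ) (hL₂ : 0 < L₂) (ht : γ * L₂ < 1/2) :
    ∃ px : Euc dx → Euc dy → Euc dx, ∃ py : Euc dx → Euc dy → Euc dy,
      (∀ x y, HasGradientAt (fun x' => moreau G γ x' y) (px x y) x) ∧
      (∀ x y, HasGradientAt (fun y' => moreau G γ x y') (py x y) y) ∧
      (∀ x y x' y', pnorm (px x y - px x' y') (py x y - py x' y') ≤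
        γ⁻¹ * pnorm (x - x') (y - y')) := by
  have hL2 : 0 ≤ L₂ := hL₂.le
  have hhalf : L₂ < 1/(2*γ) := by
    rw [lt_div_iff₀ (by positivity)]
    linarith
  choose θs hθs using fun x y => exists_argmin hG hγ0 hL2 hhalf x y
  -- first-order condition
  have foc : ∀ x y, grady G x (θs x y) = γ⁻¹ • (y - θs x y) := by
    intro x y
    set θh := θs x y with hθh
    have hdiff : HasGradientAt (fun θ => G x θ + ‖θ - y‖^2/(2*γ))
        (grady G x θh + γ⁻¹ • (θh - y)) θh :=
      HasGradientAt.add' ((hG.2.1 x θh).hasGradientAt) (hasGradientAt_quad hγ0 y θh)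
    have hmin : IsLocalMin (fun θ => G x θ + ‖θ - y‖^2/(2*γ)) θh :=
      Filter.Eventually.of_forall fun θ' => hθs x y θ'
    have hfd0 : fderiv ℝ (fun θ => G x θ + ‖θ - y‖^2/(2*γ)) θh = 0 := hmin.fderiv_eq_zero
    have hfd := hdiff.hasFDerivAt.fderiv
    rw [hfd0] at hfd
    have hz : grady G x θh + γ⁻¹ • (θh - y) = 0 := by
      apply (toDual ℝ (Euc dy)).injective
      rw [← hfd]
      simp
    rw [add_eq_zero_iff_eq_neg] at hz
    rw [hz, ← smul_neg, neg_sub]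
  -- envelope value
  have Vle : ∀ x y θ, moreau G γ x y ≤ G x θ + ‖θ - y‖^2/(2*γ) := by
    intro x y θ
    apply ciInf_le ⟨G x (θs x y) + ‖θs x y - y‖^2/(2*γ), ?_⟩ θ
    rintro r ⟨θ', rfl⟩
    exact hθs x y θ'
  have Venv : ∀ x y, moreau G γ x y = G x (θs x y) + ‖θs x y - y‖^2/(2*γ) :=
    fun x y => le_antisymm (Vle x y (θs x y)) (le_ciInf (hθs x y))
  -- Lipschitz property of the candidate gradient pair
  have lip : ∀ x y x' y', pnorm (gradx G x (θs x y) - gradx G x' (θs x' y'))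
      (γ⁻¹ • (y - θs x y) - γ⁻¹ • (y' - θs x' y')) ≤ γ⁻¹ * pnorm (x - x') (y - y') := by
    intro x y x' y'
    set θ := θs x y with hθ
    set θ' := θs x' y' with hθ'
    set a := gradx G x θ - gradx G x' θ' with ha
    set b := grady G x θ - grady G x' θ' with hb
    have hby : γ⁻¹ • (y - θ) - γ⁻¹ • (y' - θ') = b := by
      rw [hb, foc x y, foc x' y', ← hθ, ← hθ']
    rw [hby]
    have hGb : pnorm a b ≤ L₂ * pnorm (x - x') (θ - θ') := hG.2.2 x θ x' θ'
    have hvw : y - y' = (θ - θ') + γ • b := by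
      have hgb : γ • b = (y - θ) - (y' - θ') := by
        rw [hb, foc x y, foc x' y', ← hθ, ← hθ', ← smul_sub, smul_smul,
          mul_inv_cancel₀ (ne_of_gt hγ0), one_smul]
      rw [hgb]
      abel
    have hnv : ‖y - y'‖^2 = ‖θ - θ'‖^2 + 2 * γ * ⟪θ - θ', b⟫_ℝ + γ^2 * ‖b‖^2 := by
      rw [hvw, norm_add_sq_real, real_inner_smul_right, norm_smul,
        Real.norm_eq_abs, abs_of_pos hγ0]
      ring
    have hipb : -(‖θ - θ'‖ * ‖b‖) ≤ ⟪θ - θ', b⟫_ℝ := by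
      have := abs_real_inner_le_norm (θ - θ') b
      cases abs_le.mp this with
      | intro h1 h2 => linarith
    have hsq : ‖a‖^2 + ‖b‖^2 ≤ L₂^2 * (‖x - x'‖^2 + ‖θ - θ'‖^2) := by
      have h1 := pnorm_sq a b
      have h2 := pnorm_sq (x - x') (θ - θ')
      nlinarith [pnorm_nonneg a b, pnorm_nonneg (x - x') (θ - θ'), hGb,
        mul_nonneg hL2 (pnorm_nonneg (x - x') (θ - θ'))]
    apply pnorm_le_of_mul_sq hγ0
    rw [hnv]
    exact scalar_key hγ0 hL₂ ht (norm_nonneg a) (norm_nonneg b) (norm_nonneg (x - x'))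
      (norm_nonneg (θ - θ')) hsq hipb
  -- quadratic upper bound
  have upper : ∀ x y x' y', moreau G γ x' y' ≤ moreau G γ x y
      + ⟪gradx G x (θs x y), x' - x⟫ + ⟪γ⁻¹ • (y - θs x y), y' - y⟫
      + (L₂ + γ⁻¹) * (‖x' - x‖^2 + ‖y' - y‖^2) := by
    intro x y x' y'
    set θ := θs x y with hθ
    have h1 : moreau G γ x' y' ≤ G x' θ + ‖θ - y'‖^2/(2*γ) := Vle x' y' θ
    have hdesc := descent_abs hL2 (hG.1 θ) (fun p q => lip_gradx_x hG θ p q) x x'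
    have hgr : gradient (fun x'' => G x'' θ) x = gradx G x θ := rfl
    rw [hgr] at hdesc
    have h2 : G x' θ ≤ G x θ + ⟪gradx G x θ, x' - x⟫ + L₂ * ‖x' - x‖^2 := by
      cases abs_le.mp hdesc with
      | intro ha hb => linarith
    have h3 : ‖θ - y'‖^2 = ‖θ - y‖^2 + 2 * ⟪θ - y, y - y'⟫ + ‖y - y'‖^2 := by
      have := norm_add_sq_real (θ - y) (y - y')
      rw [show θ - y + (y - y') = θ - y' by abel] at this
      linarith
    have h4 : ⟪γ⁻¹ • (y - θ), y' - y⟫_ℝ = γ⁻¹ * ⟪θ - y, y - y'⟫_ℝ := by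
      rw [real_inner_smul_left, show y' - y = -(y - y') by abel,
        show (y:Euc dy) - θ = -(θ - y) by abel, inner_neg_neg]
    have h5 : ‖θ - y'‖^2/(2*γ) = ‖θ - y‖^2/(2*γ) + γ⁻¹ * ⟪θ - y, y - y'⟫_ℝ
        + ‖y - y'‖^2/(2*γ) := by
      rw [h3]
      field_simp
    have h6 : ‖y - y'‖^2/(2*γ) ≤ γ⁻¹ * ‖y - y'‖^2 := by
      rw [div_le_iff₀ (by positivity)]
      have : γ⁻¹ * ‖y - y'‖ ^ 2 * (2 * γ) = 2 * ‖y - y'‖^2 := by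
        field_simp
      rw [this]
      nlinarith [sq_nonneg ‖y - y'‖]
    have hV := Venv x y
    have hyy' : ‖y' - y‖^2 = ‖y - y'‖^2 := by rw [norm_sub_rev]
    rw [h4]
    have hγinv : (0:ℝ) ≤ γ⁻¹ := by positivity
    have hm1 : (0:ℝ) ≤ γ⁻¹ * ‖x' - x‖^2 := by positivity
    have hm2 : (0:ℝ) ≤ L₂ * ‖y - y'‖^2 := by positivity
    have he : (L₂ + γ⁻¹) * (‖x' - x‖^2 + ‖y' - y‖^2) =
        L₂ * ‖x' - x‖^2 + γ⁻¹ * ‖x' - x‖^2 + L₂ * ‖y - y'‖^2 + γ⁻¹ * ‖y - y'‖^2 := by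
      rw [hyy']
      ring
    linarith [h1, h2, h5, h6, hV, he, hm1, hm2]
  refine ⟨fun x y => gradx G x (θs x y), fun x y => γ⁻¹ • (y - θs x y), ?_, ?_, lip⟩
  · -- gradient in x
    intro x y
    apply hasGradientAt_of_quad (C := L₂ + γ⁻¹ + γ⁻¹)
    intro x'
    have hup : moreau G γ x' y - moreau G γ x y - ⟪gradx G x (θs x y), x' - x⟫ ≤
        (L₂ + γ⁻¹) * ‖x' - x‖^2 := by
      have := upper x y x' y
      simp only [sub_self, inner_zero_right, norm_zero] at this
      nlinarith [this]
    have hlo : -((L₂ + γ⁻¹ + γ⁻¹) * ‖x' - x‖^2) ≤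
        moreau G γ x' y - moreau G γ x y - ⟪gradx G x (θs x y), x' - x⟫ := by
      have hu2 := upper x' y x y
      simp only [sub_self, inner_zero_right, norm_zero] at hu2
      -- hu2 : V x y ≤ V x' y + ⟪px x' y, x - x'⟫ + (L₂+γ⁻¹)‖x-x'‖²
      have hdpx : ‖gradx G x' (θs x' y) - gradx G x (θs x y)‖ ≤ γ⁻¹ * ‖x' - x‖ := by
        have := lip x' y x y
        have h2 := (norm_fst_le_pnorm (gradx G x' (θs x' y) - gradx G x (θs x y))
          (γ⁻¹ • (y - θs x' y) - γ⁻¹ • (y - θs x y))).trans this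
        rwa [sub_self, pnorm_zero_right] at h2
      have hip2 : ⟪gradx G x' (θs x' y) - gradx G x (θs x y), x - x'⟫_ℝ ≤
          γ⁻¹ * ‖x' - x‖ * ‖x - x'‖ := by
        have hcs := real_inner_le_norm (gradx G x' (θs x' y) - gradx G x (θs x y)) (x - x')
        have := mul_le_mul_of_nonneg_right hdpx (norm_nonneg (x - x'))
        linarith
      have hsplit : ⟪gradx G x' (θs x' y), x - x'⟫_ℝ =
          ⟪gradx G x (θs x y), x - x'⟫_ℝ +
          ⟪gradx G x' (θs x' y) - gradx G x (θs x y), x - x'⟫_ℝ := by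
        rw [← inner_add_left]
        norm_num
      have hflip : ⟪gradx G x (θs x y), x - x'⟫_ℝ = -⟪gradx G x (θs x y), x' - x⟫_ℝ := by
        rw [show x - x' = -(x' - x) by abel, inner_neg_right]
      have hnorm : ‖x - x'‖ = ‖x' - x‖ := norm_sub_rev _ _
      have hprod : γ⁻¹ * ‖x' - x‖ * ‖x - x'‖ = γ⁻¹ * ‖x' - x‖^2 := by rw [hnorm]; ring
      have heq : (L₂ + γ⁻¹) * (‖x - x'‖^2 + (0:ℝ)^2) = (L₂ + γ⁻¹) * ‖x' - x‖^2 := by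
        rw [hnorm]; ring
      linarith [hu2]
    rw [abs_le]
    constructor
    · linarith
    · have : (L₂ + γ⁻¹) * ‖x' - x‖^2 ≤ (L₂ + γ⁻¹ + γ⁻¹) * ‖x' - x‖^2 := by
        nlinarith [sq_nonneg ‖x' - x‖, inv_nonneg.mpr hγ0.le]
      linarith
  · -- gradient in y
    intro x y
    apply hasGradientAt_of_quad (C := L₂ + γ⁻¹ + γ⁻¹)
    intro y'
    have hup : moreau G γ x y' - moreau G γ x y - ⟪γ⁻¹ • (y - θs x y), y' - y⟫ ≤
        (L₂ + γ⁻¹) * ‖y' - y‖^2 := by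
      have := upper x y x y'
      simp only [sub_self, inner_zero_right, norm_zero] at this
      nlinarith [this]
    have hlo : -((L₂ + γ⁻¹ + γ⁻¹) * ‖y' - y‖^2) ≤
        moreau G γ x y' - moreau G γ x y - ⟪γ⁻¹ • (y - θs x y), y' - y⟫ := by
      have hu2 := upper x y' x y
      simp only [sub_self, inner_zero_right, norm_zero] at hu2
      have hdpy : ‖γ⁻¹ • (y' - θs x y') - γ⁻¹ • (y - θs x y)‖ ≤ γ⁻¹ * ‖y' - y‖ := by
        have := lip x y' x y
        have h2 := (norm_snd_le_pnorm (gradx G x (θs x y') - gradx G x (θs x y))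
          (γ⁻¹ • (y' - θs x y') - γ⁻¹ • (y - θs x y))).trans this
        rwa [sub_self, pnorm_zero_left] at h2
      have hip2 : ⟪γ⁻¹ • (y' - θs x y') - γ⁻¹ • (y - θs x y), y - y'⟫_ℝ ≤
          γ⁻¹ * ‖y' - y‖ * ‖y - y'‖ := by
        have hcs := real_inner_le_norm (γ⁻¹ • (y' - θs x y') - γ⁻¹ • (y - θs x y)) (y - y')
        have := mul_le_mul_of_nonneg_right hdpy (norm_nonneg (y - y'))
        linarith
      have hsplit : ⟪γ⁻¹ • (y' - θs x y'), y - y'⟫_ℝ =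
          ⟪γ⁻¹ • (y - θs x y), y - y'⟫_ℝ +
          ⟪γ⁻¹ • (y' - θs x y') - γ⁻¹ • (y - θs x y), y - y'⟫_ℝ := by
        rw [← inner_add_left]
        norm_num
      have hflip : ⟪γ⁻¹ • (y - θs x y), y - y'⟫_ℝ = -⟪γ⁻¹ • (y - θs x y), y' - y⟫_ℝ := by
        rw [show y - y' = -(y' - y) by abel, inner_neg_right]
      have hnorm : ‖y - y'‖ = ‖y' - y‖ := norm_sub_rev _ _
      have hprod : γ⁻¹ * ‖y' - y‖ * ‖y - y'‖ = γ⁻¹ * ‖y' - y‖^2 := by rw [hnorm]; ring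
      have heq : (L₂ + γ⁻¹) * ((0:ℝ)^2 + ‖y - y'‖^2) = (L₂ + γ⁻¹) * ‖y' - y‖^2 := by
        rw [hnorm]; ring
      linarith [hu2]
    rw [abs_le]
    constructor
    · linarith
    · have : (L₂ + γ⁻¹) * ‖y' - y‖^2 ≤ (L₂ + γ⁻¹ + γ⁻¹) * ‖y' - y‖^2 := by
        nlinarith [sq_nonneg ‖y' - y‖, inv_nonneg.mpr hγ0.le]
      linarith

end core


/-- the penalized function `Φ_μ(x,y) = μ(F(x,y) − F̲) + G(x,y) − V_γ(x,y)` is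
`L_Φ`-smooth with `L_Φ = μL₁ + L₂ + max{L₂, 1/γ}`. -/
theorem penalized_objective_smooth {dx dy : ℕ} (L₁ L₂ γ μ Fbar : ℝ) (hL₂ : 0 < L₂)
    (F G : Euc dx → Euc dy → ℝ)
    (hF : LSmooth L₁ F) (hG : LSmooth L₂ G)
    (hFb : ∀ x y, Fbar ≤ F x y)
    (hγ0 : 0 < γ) (hγ : γ < 1 / (2 * L₂)) (hμ : 0 ≤ μ) :
    LSmooth (μ * L₁ + L₂ + max L₂ (1 / γ))
      (fun x y => μ * (F x y - Fbar) + G x y - moreau G γ x y) := by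
  have ht : γ * L₂ < 1/2 := by
    rw [lt_div_iff₀ (by positivity : (0:ℝ) < 2 * L₂)] at hγ
    nlinarith
  obtain ⟨px, py, hpx, hpy, hplip⟩ := moreau_core hG hγ0 hL₂ ht
  have hgradx : ∀ x y, HasGradientAt
      (fun x' => μ * (F x' y - Fbar) + G x' y - moreau G γ x' y)
      (μ • gradx F x y + gradx G x y - px x y) x := by
    intro x y
    exact (HasGradientAt.add'
      (HasGradientAt.const_mul_sub μ Fbar (hF.1 y x).hasGradientAt)
      (hG.1 y x).hasGradientAt).sub' (hpx x y)
  have hgrady : ∀ x y, HasGradientAt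
      (fun y' => μ * (F x y' - Fbar) + G x y' - moreau G γ x y')
      (μ • grady F x y + grady G x y - py x y) y := by
    intro x y
    exact (HasGradientAt.add'
      (HasGradientAt.const_mul_sub μ Fbar (hF.2.1 x y).hasGradientAt)
      (hG.2.1 x y).hasGradientAt).sub' (hpy x y)
  refine ⟨fun y => fun x => (hgradx x y).differentiableAt,
    fun x => fun y => (hgrady x y).differentiableAt, ?_⟩
  intro x y x' y'
  have e1 : ∀ x y, gradx (fun x y => μ * (F x y - Fbar) + G x y - moreau G γ x y) x y =
      μ • gradx F x y + gradx G x y - px x y := fun x y => (hgradx x y).gradient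
  have e2 : ∀ x y, grady (fun x y => μ * (F x y - Fbar) + G x y - moreau G γ x y) x y =
      μ • grady F x y + grady G x y - py x y := fun x y => (hgrady x y).gradient
  rw [e1, e1, e2, e2]
  have hre1 : (μ • gradx F x y + gradx G x y - px x y)
      - (μ • gradx F x' y' + gradx G x' y' - px x' y')
      = μ • (gradx F x y - gradx F x' y') +
        ((gradx G x y - gradx G x' y') + -(px x y - px x' y')) := by
    module
  have hre2 : (μ • grady F x y + grady G x y - py x y)
      - (μ • grady F x' y' + grady G x' y' - py x' y')
      = μ • (grady F x y - grady F x' y') +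
        ((grady G x y - grady G x' y') + -(py x y - py x' y')) := by
    module
  rw [hre1, hre2]
  have step1 := pnorm_add_le (μ • (gradx F x y - gradx F x' y'))
    ((gradx G x y - gradx G x' y') + -(px x y - px x' y'))
    (μ • (grady F x y - grady F x' y'))
    ((grady G x y - grady G x' y') + -(py x y - py x' y'))
  have step2 := pnorm_add_le (gradx G x y - gradx G x' y') (-(px x y - px x' y'))
    (grady G x y - grady G x' y') (-(py x y - py x' y'))
  rw [pnorm_smul μ hμ] at step1
  rw [pnorm_neg] at step2
  have hFe : pnorm (gradx F x y - gradx F x' y') (grady F x y - grady F x' y') ≤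
      L₁ * pnorm (x - x') (y - y') := hF.2.2 x y x' y'
  have hGe : pnorm (gradx G x y - gradx G x' y') (grady G x y - grady G x' y') ≤
      L₂ * pnorm (x - x') (y - y') := hG.2.2 x y x' y'
  have hPe : pnorm (px x y - px x' y') (py x y - py x' y') ≤
      γ⁻¹ * pnorm (x - x') (y - y') := hplip x y x' y'
  have hmax : γ⁻¹ ≤ max L₂ (1/γ) := by
    rw [one_div]
    exact le_max_right _ _
  have hpn : 0 ≤ pnorm (x - x') (y - y') := pnorm_nonneg _ _
  have hμF := mul_le_mul_of_nonneg_left hFe hμ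
  have hmaxP : γ⁻¹ * pnorm (x - x') (y - y') ≤ max L₂ (1/γ) * pnorm (x - x') (y - y') :=
    mul_le_mul_of_nonneg_right hmax hpn
  nlinarith [step1, step2, hμF, hGe, hPe, hmaxP]
end
end

section
/- Let f_i, g_i : ℝ^{d_x} × ℝ^{d_y} → ℝ (i = 1,…,n) be L₁-smooth and L₂-smooth respectively, with L₂ > 0, let F := (1/n)∑_{i=1}^n f_i, G := (1/n)∑_{i=1}^n g_i, let γ ∈ (0, 1/(2L₂)), and let μ ≥ 0. Then for any families (x_i)_{i=1}^n in ℝ^{d_x} and (y_i)_{i=1}^n, (θ_i)_{i=1}^n in ℝ^{d_y} with averages x̄, ȳ, θ̄: ‖ μ∇_x F(x̄,ȳ) + ∇_x G(x̄,ȳ) − ∇_x G(x̄, θ*_γ(x̄,ȳ)) − (1/n) ∑_{i=1}^n ( μ∇_x f_i(x_i,y_i) + ∇_x g_i(x_i,y_i) − ∇_x g_i(x_i,θ_i) ) ‖² ≤ 2L₂² ‖θ*_γ(x̄,ȳ) − θ̄‖² + 6(μ²L₁² + 2L₂²) Δ_x + 6(μ²L₁² + L₂²) Δ_y + 6L₂²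 Δ_θ. -/
open scoped RealInnerProductSpace

noncomputable section

/-- The average `(1/n) ∑ᵢ vᵢ` of a family of vectors. -/
noncomputable def avg {n : ℕ} {V : Type} [AddCommGroup V] [Module ℝ V] (v : Fin n → V) : V :=
  (n : ℝ)⁻¹ • ∑ i, v i

/-- The mean squared deviation `(1/n) ∑ᵢ ‖vᵢ − v̄‖²` of a family of vectors. -/
noncomputable def devSq {n d : ℕ} (v : Fin n → Euc d) : ℝ :=
  (n : ℝ)⁻¹ * ∑ i, ‖v i - avg v‖ ^ 2

open InnerProductSpace in
lemma gradient_avg' {d n : ℕ} (c : ℝ) (f : Fin n → Euc d → ℝ)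
    (hf : ∀ i, Differentiable ℝ (f i)) (x : Euc d) :
    gradient (fun x' => c * ∑ i, f i x') x = c • ∑ i, gradient (f i) x := by
  have h : HasFDerivAt (fun x' => c * ∑ i, f i x')
      (c • ∑ i, (toDual ℝ (Euc d)) (gradient (f i) x)) x := by
    refine HasFDerivAt.const_mul ?_ c
    exact HasFDerivAt.fun_sum fun i _ => ((hf i x).hasGradientAt).hasFDerivAt
  have h2 := hasFDerivAt_iff_hasGradientAt.mp h
  have h3 : (toDual ℝ (Euc d)).symm (c • ∑ i, (toDual ℝ (Euc d)) (gradient (f i) x))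
      = c • ∑ i, gradient (f i) x := by
    simp [map_smul, map_sum]; rfl
  rw [h3] at h2
  exact h2.gradient

/-- `gradx` of an average is the average of `gradx`. -/
lemma gradx_avg {dx dy n : ℕ} (f : Fin n → Euc dx → Euc dy → ℝ)
    (hf : ∀ i, ∀ y, Differentiable ℝ fun x => f i x y) (x : Euc dx) (y : Euc dy) :
    gradx (fun a b => (n : ℝ)⁻¹ * ∑ i, f i a b) x y = (n : ℝ)⁻¹ • ∑ i, gradx (f i) x y := by
  simpa [gradx] using gradient_avg' ((n : ℝ)⁻¹) (fun i x' => f i x' y) (fun i => hf i y) x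

/-- Squared Lipschitz bound on the `x`-gradient extracted from `LSmooth`. -/
lemma lipx_sq {dx dy : ℕ} {L : ℝ} {h : Euc dx → Euc dy → ℝ} (hh : LSmooth L h)
    (x x' : Euc dx) (y y' : Euc dy) :
    ‖gradx h x y - gradx h x' y'‖ ^ 2 ≤ L ^ 2 * (‖x - x'‖ ^ 2 + ‖y - y'‖ ^ 2) := by
  have h1 := hh.2.2 x y x' y'
  set a := gradx h x y - gradx h x' y'
  set b := grady h x y - grady h x' y'
  have h2 : ‖a‖ ≤ pnorm a b := by
    rw [pnorm]
    calc ‖a‖ = Real.sqrt (‖a‖ ^ 2) := (Real.sqrt_sq (norm_nonneg a)).symm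
      _ ≤ Real.sqrt (‖a‖ ^ 2 + ‖b‖ ^ 2) := Real.sqrt_le_sqrt (by nlinarith [sq_nonneg ‖b‖])
  have h3 : ‖a‖ ≤ L * pnorm (x - x') (y - y') := le_trans h2 h1
  have h4 : pnorm (x - x') (y - y') ^ 2 = ‖x - x'‖ ^ 2 + ‖y - y'‖ ^ 2 :=
    Real.sq_sqrt (by positivity)
  nlinarith [norm_nonneg a, Real.sqrt_nonneg (‖x - x'‖ ^ 2 + ‖y - y'‖ ^ 2),
    pnorm (x - x') (y - y') ^ 2]

/-- Jensen: squared norm of an average is at most the average of squared norms. -/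
lemma norm_avg_sq_le {d n : ℕ} (hn : 0 < n) (v : Fin n → Euc d) :
    ‖(n : ℝ)⁻¹ • ∑ i, v i‖ ^ 2 ≤ (n : ℝ)⁻¹ * ∑ i, ‖v i‖ ^ 2 := by
  have npos : (0 : ℝ) < n := Nat.cast_pos.mpr hn
  have h1 : ‖∑ i, v i‖ ^ 2 ≤ (∑ i, ‖v i‖) ^ 2 :=
    pow_le_pow_left₀ (norm_nonneg _) (norm_sum_le _ _) 2
  have h2 : (∑ i, ‖v i‖) ^ 2 ≤ (n : ℝ) * ∑ i, ‖v i‖ ^ 2 := by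
    simpa using sq_sum_le_card_mul_sum_sq (s := (Finset.univ : Finset (Fin n)))
      (f := fun i => ‖v i‖)
  rw [norm_smul]
  have h3 : ‖(n : ℝ)⁻¹‖ = (n : ℝ)⁻¹ := by
    rw [Real.norm_eq_abs]; exact abs_of_nonneg (by positivity)
  rw [h3, mul_pow]
  have key : ((n : ℝ)⁻¹) ^ 2 * ((n : ℝ) * ∑ i, ‖v i‖ ^ 2) = (n : ℝ)⁻¹ * ∑ i, ‖v i‖ ^ 2 := by
    field_simp
  nlinarith [sq_nonneg ((n:ℝ)⁻¹)]


lemma sq_two_bound {s p q : ℝ} (hs : 0 ≤ s) (h : s ≤ p + q) : s ^ 2 ≤ 2 * p ^ 2 + 2 * q ^ 2 := by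
  nlinarith [sq_nonneg (p - q), sq_nonneg (p + q)]

lemma sq_three_bound {s p q r : ℝ} (hs : 0 ≤ s) (h : s ≤ p + q + r) (hp : 0 ≤ p) (hq : 0 ≤ q)
    (hr : 0 ≤ r) : s ^ 2 ≤ 3 * p ^ 2 + 3 * q ^ 2 + 3 * r ^ 2 := by
  nlinarith [sq_nonneg (p - q), sq_nonneg (p - r), sq_nonneg (q - r)]

/-- key per-agent bound -/
lemma smul_tri_sq {d : ℕ} {μ L₁ L₂ X Y T : ℝ} (a b c : Euc d) (hμ : 0 ≤ μ)
    (ha : ‖a‖ ^ 2 ≤ L₁ ^ 2 * (X + Y)) (hb : ‖b‖ ^ 2 ≤ L₂ ^ 2 * (X + Y))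
    (hc : ‖c‖ ^ 2 ≤ L₂ ^ 2 * (X + T)) :
    ‖μ • a + b - c‖ ^ 2 ≤ 3 * (μ ^ 2 * L₁ ^ 2 + 2 * L₂ ^ 2) * X +
      3 * (μ ^ 2 * L₁ ^ 2 + L₂ ^ 2) * Y + 3 * L₂ ^ 2 * T := by
  have htri : ‖μ • a + b - c‖ ≤ μ * ‖a‖ + ‖b‖ + ‖c‖ := by
    calc ‖μ • a + b - c‖ ≤ ‖μ • a + b‖ + ‖c‖ := norm_sub_le _ _
      _ ≤ ‖μ • a‖ + ‖b‖ + ‖c‖ := by gcongr; exact norm_add_le _ _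
      _ = μ * ‖a‖ + ‖b‖ + ‖c‖ := by rw [norm_smul, Real.norm_eq_abs, abs_of_nonneg hμ]
  have hsq : ‖μ • a + b - c‖ ^ 2 ≤ 3 * (μ * ‖a‖) ^ 2 + 3 * ‖b‖ ^ 2 + 3 * ‖c‖ ^ 2 :=
    sq_three_bound (norm_nonneg _) htri (mul_nonneg hμ (norm_nonneg a)) (norm_nonneg b)
      (norm_nonneg c)
  have ha' : μ ^ 2 * ‖a‖ ^ 2 ≤ μ ^ 2 * (L₁ ^ 2 * (X + Y)) :=
    mul_le_mul_of_nonneg_left ha (sq_nonneg μ)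
  nlinarith [hb, hc]

/-- bound on the deviation of the averaged `x`-direction from the centralized
direction.  Here `F = (1/n)∑ fᵢ`, `G = (1/n)∑ gᵢ`, `θs` is the proximal solution map of `G`
(the unique minimizer characterized by `hθs`), `x̄, ȳ, θ̄` are the agent averages and
`Δ_x, Δ_y, Δ_θ` the consensus errors. -/
theorem averaged_x_direction_error_bound {dx dy n : ℕ} (hn : 0 < n) (L₁ L₂ γ μ : ℝ)
    (hL₂ : 0 < L₂) (hγ0 : 0 < γ) (hγ : γ < 1 / (2 * L₂)) (hμ : 0 ≤ μ)
    (f g : Fin n → Euc dx → Euc dy → ℝ)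
    (hf : ∀ i, LSmooth L₁ (f i)) (hg : ∀ i, LSmooth L₂ (g i))
    (F G : Euc dx → Euc dy → ℝ)
    (hF : F = fun a b => (n : ℝ)⁻¹ * ∑ i, f i a b)
    (hG : G = fun a b => (n : ℝ)⁻¹ * ∑ i, g i a b)
    (θs : Euc dx → Euc dy → Euc dy)
    (hθs : ∀ x y θ, θ ≠ θs x y →
      G x (θs x y) + ‖θs x y - y‖ ^ 2 / (2 * γ) < G x θ + ‖θ - y‖ ^ 2 / (2 * γ))
    (xv : Fin n → Euc dx) (yv θv : Fin n → Euc dy) :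
    ‖μ • gradx F (avg xv) (avg yv) + gradx G (avg xv) (avg yv) -
        gradx G (avg xv) (θs (avg xv) (avg yv)) -
        (n : ℝ)⁻¹ • ∑ i, (μ • gradx (f i) (xv i) (yv i) + gradx (g i) (xv i) (yv i) -
          gradx (g i) (xv i) (θv i))‖ ^ 2 ≤
      2 * L₂ ^ 2 * ‖θs (avg xv) (avg yv) - avg θv‖ ^ 2 +
        6 * (μ ^ 2 * L₁ ^ 2 + 2 * L₂ ^ 2) * devSq xv +
        6 * (μ ^ 2 * L₁ ^ 2 + L₂ ^ 2) * devSq yv +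
        6 * L₂ ^ 2 * devSq θv := by
  have npos : (0 : ℝ) < n := Nat.cast_pos.mpr hn
  set xb := avg xv with hxb
  set yb := avg yv with hyb
  set tb := avg θv with htb
  set ts := θs xb yb with hts
  -- per-agent deviation vectors
  set w : Fin n → Euc dx := fun i =>
    μ • (gradx (f i) xb yb - gradx (f i) (xv i) (yv i)) +
      (gradx (g i) xb yb - gradx (g i) (xv i) (yv i)) -
      (gradx (g i) xb tb - gradx (g i) (xv i) (θv i)) with hw
  set u : Euc dx := gradx G xb tb - gradx G xb ts with hu
  clear_value w u
  -- gradient of averages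
  have hFgrad : ∀ x y, gradx F x y = (n : ℝ)⁻¹ • ∑ i, gradx (f i) x y := by
    intro x y; rw [hF]; exact gradx_avg f (fun i => (hf i).1) x y
  have hGgrad : ∀ x y, gradx G x y = (n : ℝ)⁻¹ • ∑ i, gradx (g i) x y := by
    intro x y; rw [hG]; exact gradx_avg g (fun i => (hg i).1) x y
  -- decomposition
  have hsum : ∑ i, w i = μ • (∑ i, gradx (f i) xb yb) + (∑ i, gradx (g i) xb yb)
      - (∑ i, gradx (g i) xb tb)
      - ∑ i, (μ • gradx (f i) (xv i) (yv i) + gradx (g i) (xv i) (yv i) -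
          gradx (g i) (xv i) (θv i)) := by
    simp only [hw, Finset.sum_sub_distrib, Finset.sum_add_distrib, Finset.smul_sum, smul_sub]
    abel
  have hdecomp : μ • gradx F xb yb + gradx G xb yb - gradx G xb ts -
      (n : ℝ)⁻¹ • ∑ i, (μ • gradx (f i) (xv i) (yv i) + gradx (g i) (xv i) (yv i) -
        gradx (g i) (xv i) (θv i)) = u + (n : ℝ)⁻¹ • ∑ i, w i := by
    rw [hu, hFgrad, hGgrad, hGgrad, hGgrad, hsum]
    generalize (∑ i, gradx (f i) xb yb) = S1
    generalize (∑ i, gradx (g i) xb yb) = S2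
    generalize (∑ i, gradx (g i) xb ts) = S3
    generalize (∑ i, gradx (g i) xb tb) = S4
    generalize (∑ i, (μ • gradx (f i) (xv i) (yv i) + gradx (g i) (xv i) (yv i) -
        gradx (g i) (xv i) (θv i))) = SB
    module
  rw [hdecomp]
  -- bound ‖u‖²
  have hu2 : ‖u‖ ^ 2 ≤ L₂ ^ 2 * ‖ts - tb‖ ^ 2 := by
    have : u = (n : ℝ)⁻¹ • ∑ i, (gradx (g i) xb tb - gradx (g i) xb ts) := by
      rw [hu, hGgrad, hGgrad, ← smul_sub, Finset.sum_sub_distrib]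
    rw [this]
    calc ‖(n : ℝ)⁻¹ • ∑ i, (gradx (g i) xb tb - gradx (g i) xb ts)‖ ^ 2
        ≤ (n : ℝ)⁻¹ * ∑ i, ‖gradx (g i) xb tb - gradx (g i) xb ts‖ ^ 2 :=
          norm_avg_sq_le hn _
      _ ≤ (n : ℝ)⁻¹ * ∑ i, L₂ ^ 2 * (‖xb - xb‖ ^ 2 + ‖tb - ts‖ ^ 2) :=
          mul_le_mul_of_nonneg_left
            (Finset.sum_le_sum fun i _ => lipx_sq (hg i) xb xb tb ts) (by positivity)
      _ = L₂ ^ 2 * ‖ts - tb‖ ^ 2 := by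
          have he : ∀ _i : Fin n, L₂ ^ 2 * (‖xb - xb‖ ^ 2 + ‖tb - ts‖ ^ 2) =
              L₂ ^ 2 * ‖ts - tb‖ ^ 2 := by
            intro _i; rw [sub_self, norm_zero, norm_sub_rev]; ring
          rw [Finset.sum_congr rfl fun i _ => he i, Finset.sum_const, Finset.card_univ,
            Fintype.card_fin, nsmul_eq_mul]
          field_simp
  -- bound ‖wᵢ‖²
  have hwi : ∀ i, ‖w i‖ ^ 2 ≤
      3 * (μ ^ 2 * L₁ ^ 2 + 2 * L₂ ^ 2) * ‖xv i - xb‖ ^ 2 +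
      3 * (μ ^ 2 * L₁ ^ 2 + L₂ ^ 2) * ‖yv i - yb‖ ^ 2 +
      3 * L₂ ^ 2 * ‖θv i - tb‖ ^ 2 := by
    intro i
    have hwid : w i = μ • (gradx (f i) xb yb - gradx (f i) (xv i) (yv i)) +
        (gradx (g i) xb yb - gradx (g i) (xv i) (yv i)) -
        (gradx (g i) xb tb - gradx (g i) (xv i) (θv i)) := by simp only [hw]
    rw [hwid]
    refine smul_tri_sq _ _ _ hμ ?_ ?_ ?_
    · have h := lipx_sq (hf i) xb (xv i) yb (yv i)
      rwa [norm_sub_rev xb (xv i), norm_sub_rev yb (yv i)] at h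
    · have h := lipx_sq (hg i) xb (xv i) yb (yv i)
      rwa [norm_sub_rev xb (xv i), norm_sub_rev yb (yv i)] at h
    · have h := lipx_sq (hg i) xb (xv i) tb (θv i)
      rwa [norm_sub_rev xb (xv i), norm_sub_rev tb (θv i)] at h
  -- bound ‖W‖²
  have hW : ‖(n : ℝ)⁻¹ • ∑ i, w i‖ ^ 2 ≤
      3 * (μ ^ 2 * L₁ ^ 2 + 2 * L₂ ^ 2) * devSq xv +
      3 * (μ ^ 2 * L₁ ^ 2 + L₂ ^ 2) * devSq yv +
      3 * L₂ ^ 2 * devSq θv := by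
    calc ‖(n : ℝ)⁻¹ • ∑ i, w i‖ ^ 2 ≤ (n : ℝ)⁻¹ * ∑ i, ‖w i‖ ^ 2 := norm_avg_sq_le hn w
      _ ≤ (n : ℝ)⁻¹ * ∑ i, (3 * (μ ^ 2 * L₁ ^ 2 + 2 * L₂ ^ 2) * ‖xv i - xb‖ ^ 2 +
            3 * (μ ^ 2 * L₁ ^ 2 + L₂ ^ 2) * ‖yv i - yb‖ ^ 2 +
            3 * L₂ ^ 2 * ‖θv i - tb‖ ^ 2) :=
          mul_le_mul_of_nonneg_left (Finset.sum_le_sum fun i _ => hwi i) (by positivity)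
      _ = 3 * (μ ^ 2 * L₁ ^ 2 + 2 * L₂ ^ 2) * devSq xv +
          3 * (μ ^ 2 * L₁ ^ 2 + L₂ ^ 2) * devSq yv + 3 * L₂ ^ 2 * devSq θv := by
          simp only [Finset.sum_add_distrib, ← Finset.mul_sum, devSq, hxb, hyb, htb]
          ring
  -- combine
  have hcomb : ‖u + (n : ℝ)⁻¹ • ∑ i, w i‖ ^ 2 ≤
      2 * ‖u‖ ^ 2 + 2 * ‖(n : ℝ)⁻¹ • ∑ i, w i‖ ^ 2 :=
    sq_two_bound (norm_nonneg _) (norm_add_le _ _)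
  linarith [hu2, hW, hcomb]
end
end
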